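/- arXiv:1704.07104 — 2 statements merged into one kernel-verified Lean document; each statement's English description precedes it below -/
import Mathlib

section
/- Let m₁ = (12, {⟨0,0⟩,⟨0,2⟩,⟨1,1⟩,⟨1,2⟩,⟨2,1⟩}) and m₂ = (12, {⟨0,0⟩,⟨0,1⟩,⟨0,2⟩,⟨1,1⟩,⟨1,2⟩,⟨2,1⟩}). A permutation avoiding 321 avoids m₁ if and only if it avoids m₂. -/
def extFun {k n : ℕ} (α : Fin k → Fin n) : ℕ → ℕ := fun i =>
  if h0 : i = 0 then 0
  else if h1 : i ≤ k then ((α ⟨i - 1, by omega⟩ : Fin n) : ℕ) + 1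
  else n + 1

/-- An occurrence of the mesh pattern `(τ, R)` in `π` given by index/value
injections `α`, `β` (using 1-indexed coordinates for the regions). -/
def MeshOcc {k n : ℕ} (τ : Equiv.Perm (Fin k)) (R : Finset (ℕ × ℕ))
    (π : Equiv.Perm (Fin n)) (α β : Fin k → Fin n) : Prop :=
  StrictMono α ∧ StrictMono β ∧ (∀ i, π (α i) = β (τ i)) ∧
    ∀ p ∈ R, ∀ x : Fin n,
      ¬(extFun α p.1 < (x : ℕ) + 1 ∧ (x : ℕ) + 1 < extFun α (p.1 + 1) ∧
        extFun β p.2 < (π x : ℕ) + 1 ∧ (π x : ℕ) + 1 < extFun β (p.2 + 1))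

def ContainsMesh {k n : ℕ} (τ : Equiv.Perm (Fin k)) (R : Finset (ℕ × ℕ))
    (π : Equiv.Perm (Fin n)) : Prop :=
  ∃ α β : Fin k → Fin n, MeshOcc τ R π α β

def AvoidsMesh {k n : ℕ} (τ : Equiv.Perm (Fin k)) (R : Finset (ℕ × ℕ))
    (π : Equiv.Perm (Fin n)) : Prop :=
  ¬ ContainsMesh τ R π

/-- `π` avoids the classical pattern 321. -/
def Avoids321 {n : ℕ} (π : Equiv.Perm (Fin n)) : Prop :=
  ¬ ∃ i j k : Fin n, i < j ∧ j < k ∧ π j < π i ∧ π k < π j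

/-!
In an occurrence `(p, q)` of `m₁` the shaded boxes `⟨0,0⟩, ⟨0,2⟩, ⟨1,1⟩, ⟨2,1⟩` force the points
left of `p` to be exactly the points with value between `π p` and `π q`. If there are none, the
box `⟨0,1⟩` is empty as well. Otherwise let `a` be the first position: in column `0` of a pair
starting at `a` there is nothing to shade, and `(a, a + 1)`, or `(a, q)` when `a + 1 = p`, is an
occurrence of `m₂`; for `(a, a + 1)` this uses that the points left of `p`, all lying above `π p`,
increase when `π` avoids 321.
-/

open Equiv

def InStrip {n : ℕ} (a b : Fin n) : ℕ → Fin n → Prop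
  | 0, x => x < a
  | 1, x => a < x ∧ x < b
  | 2, x => b < x
  | _, _ => False

theorem extFun_lt_and_lt_extFun_iff {n : ℕ} (a b x : Fin n) (i : ℕ) :
    extFun ![a, b] i < x + 1 ∧ x + 1 < extFun ![a, b] (i + 1) ↔ InStrip a b i x := by
  rcases i with _ | _ | _ | i <;> simp [extFun, InStrip]

theorem ContainsMesh.mono {k n : ℕ} {τ : Perm (Fin k)} {R R' : Finset (ℕ × ℕ)}
    {π : Perm (Fin n)} (h : ContainsMesh τ R' π) (hR : R ⊆ R') : ContainsMesh τ R π :=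
  let ⟨α, β, hα, hβ, hτ, hR'⟩ := h
  ⟨α, β, hα, hβ, hτ, fun r hr => hR' r (hR hr)⟩

theorem Avoids321.apply_lt_apply {n : ℕ} {π : Perm (Fin n)} (h : Avoids321 π) {x y z : Fin n}
    (hxy : x < y) (hyz : y < z) (hz : π z < π y) : π x < π y :=
  (lt_or_gt_of_ne (π.injective.ne hxy.ne)).resolve_right fun hyx => h ⟨x, y, z, hxy, hyz, hyx, hz⟩

section IsOccurrence12

variable {n : ℕ} {π : Perm (Fin n)}

def IsOccurrence12 (R : Finset (ℕ × ℕ)) (π : Perm (Fin n)) (p q : Fin n) : Prop :=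
  p < q ∧ π p < π q ∧ ∀ r ∈ R, ∀ x, ¬(InStrip p q r.1 x ∧ InStrip (π p) (π q) r.2 (π x))

theorem containsMesh_one_iff (R : Finset (ℕ × ℕ)) (π : Perm (Fin n)) :
    ContainsMesh (1 : Perm (Fin 2)) R π ↔ ∃ p q, IsOccurrence12 R π p q := by
  simp only [ContainsMesh, MeshOcc, IsOccurrence12]
  constructor
  · rintro ⟨α, β, hα, hβ, hαβ, hR⟩
    have hβ' : β = ![π (α 0), π (α 1)] := by
      ext i; fin_cases i <;> simp [hαβ]
    have hα' : α = ![α 0, α 1] := by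
      ext i; fin_cases i <;> rfl
    subst hβ'
    refine ⟨α 0, α 1, hα Fin.zero_lt_one, hβ Fin.zero_lt_one, fun r hr x => ?_⟩
    rw [← extFun_lt_and_lt_extFun_iff, ← extFun_lt_and_lt_extFun_iff, ← hα']
    simpa [and_assoc] using hR r hr x
  · rintro ⟨p, q, hpq, hπ, hR⟩
    refine ⟨![p, q], ![π p, π q], ?_, ?_, ?_, fun r hr x => ?_⟩
    · exact Fin.strictMono_iff_lt_succ.2 fun i => by fin_cases i; exact hpq
    · exact Fin.strictMono_iff_lt_succ.2 fun i => by fin_cases i; exact hπ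
    · intro i; fin_cases i <;> rfl
    · have := hR r hr x
      rw [← extFun_lt_and_lt_extFun_iff, ← extFun_lt_and_lt_extFun_iff] at this
      simpa [and_assoc] using this

theorem IsOccurrence12.mono {R R' : Finset (ℕ × ℕ)} {p q : Fin n}
    (h : IsOccurrence12 R' π p q) (hR : R ⊆ R') : IsOccurrence12 R π p q :=
  ⟨h.1, h.2.1, fun r hr => h.2.2 r (hR hr)⟩

theorem isOccurrence12_insert_zero_iff {R : Finset (ℕ × ℕ)} {p q : Fin n} (hp : IsBot p)
    (j : ℕ) : IsOccurrence12 (insert (0, j) R) π p q ↔ IsOccurrence12 R π p q := by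
  simp only [IsOccurrence12, Finset.forall_mem_insert, InStrip]
  simp [(hp _).not_gt]

local notation "R₁" => ({(0,0),(0,2),(1,1),(1,2),(2,1)} : Finset (ℕ × ℕ))
local notation "R₂" => ({(0,0),(0,1),(0,2),(1,1),(1,2),(2,1)} : Finset (ℕ × ℕ))

theorem IsOccurrence12.lt_iff {p q : Fin n} (h : IsOccurrence12 R₁ π p q) (x : Fin n) :
    x < p ↔ π p < π x ∧ π x < π q := by
  obtain ⟨hpq, -, hR⟩ := h
  simp only [Finset.mem_insert, Finset.mem_singleton, InStrip, not_and, forall_eq_or_imp, not_lt,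
    and_imp, forall_eq] at hR
  obtain ⟨h00, h02, h11, -, h21⟩ := hR
  refine ⟨fun hx => ⟨(h00 x hx).lt_of_ne (π.injective.ne hx.ne'),
    (h02 x hx).lt_of_ne (π.injective.ne (hx.trans hpq).ne)⟩, fun ⟨hpx, hxq⟩ => ?_⟩
  by_contra! hx
  rcases hx.lt_or_eq with hpx' | rfl
  · rcases lt_trichotomy x q with hxq' | rfl | hqx
    · exact (h11 x hpx' hxq' hpx).not_gt hxq
    · exact hxq.false
    · exact (h21 x hqx hpx).not_gt hxq
  · exact hpx.false

theorem IsOccurrence12.of_covBy_left {p q a : Fin n} (h : IsOccurrence12 R₁ π p q)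
    (hap : a ⋖ p) : IsOccurrence12 {(1,1),(1,2),(2,1)} π a q := by
  have hπa := (h.lt_iff a).1 hap.lt
  refine ⟨hap.lt.trans h.1, hπa.2, ?_⟩
  intro r hr x
  simp only [Finset.mem_insert, Finset.mem_singleton] at hr
  rcases hr with rfl | rfl | rfl <;> simp only [InStrip]
  · rintro ⟨⟨hax, -⟩, hax', hxq⟩
    exact hap.2 hax ((h.lt_iff x).2 ⟨hπa.1.trans hax', hxq⟩)
  · rintro ⟨⟨hax, hxq⟩, hqx⟩
    rcases (not_lt.1 (hap.2 hax)).lt_or_eq with hpx | rfl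
    · exact h.2.2 (1,2) (by simp) x ⟨⟨hpx, hxq⟩, hqx⟩
    · exact hqx.not_gt h.2.1
  · rintro ⟨hqx, hax, hxq⟩
    exact hqx.not_gt (((h.lt_iff x).2 ⟨hπa.1.trans hax, hxq⟩).trans h.1)

theorem IsOccurrence12.of_covBy_of_lt_left (h321 : Avoids321 π) {p q a b : Fin n}
    (h : IsOccurrence12 R₁ π p q) (hab : a ⋖ b) (hbp : b < p) :
    IsOccurrence12 {(1,1),(1,2),(2,1)} π a b := by
  have hπb := (h.lt_iff b).1 hbp
  have hπa := (h.lt_iff a).1 (hab.lt.trans hbp)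
  refine ⟨hab.lt, h321.apply_lt_apply hab.lt hbp hπb.1, ?_⟩
  intro r hr x
  simp only [Finset.mem_insert, Finset.mem_singleton] at hr
  rcases hr with rfl | rfl | rfl <;> simp only [InStrip]
  · exact fun ⟨⟨hax, hxb⟩, _⟩ => hab.2 hax hxb
  · exact fun ⟨⟨hax, hxb⟩, _⟩ => hab.2 hax hxb
  · rintro ⟨hbx, hax, hxb⟩
    have hxp := (h.lt_iff x).2 ⟨hπa.1.trans hax, hxb.trans hπb.2⟩
    exact hxb.not_gt (h321.apply_lt_apply hbx hxp (hπa.1.trans hax))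

theorem IsOccurrence12.exists_isBot (h321 : Avoids321 π) {p q : Fin n}
    (h : IsOccurrence12 R₁ π p q) :
    ∃ a b, IsBot a ∧ IsOccurrence12 {(1,1),(1,2),(2,1)} π a b := by
  by_cases hp : IsBot p
  · exact ⟨p, q, hp, h.mono (by decide)⟩
  obtain ⟨c, hcp⟩ : ∃ c, c < p := by simpa [IsBot] using hp
  let a : Fin n := ⟨0, c.pos⟩
  have ha : IsBot a := fun x => Fin.le_def.2 (Nat.zero_le x)
  obtain ⟨b, hab, hbp⟩ := exists_covBy_le_of_lt ((ha c).trans_lt hcp)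
  rcases hbp.lt_or_eq with hbp | rfl
  · exact ⟨a, b, ha, h.of_covBy_of_lt_left h321 hab hbp⟩
  · exact ⟨a, q, ha, h.of_covBy_left hab⟩

theorem Avoids321.containsMesh_R₂_of_containsMesh_R₁ (h321 : Avoids321 π)
    (h : ContainsMesh (1 : Perm (Fin 2)) R₁ π) : ContainsMesh (1 : Perm (Fin 2)) R₂ π := by
  obtain ⟨p, q, hpq⟩ := (containsMesh_one_iff _ _).1 h
  obtain ⟨a, b, ha, hab⟩ := hpq.exists_isBot h321
  refine (containsMesh_one_iff _ _).2 ⟨a, b, ?_⟩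
  rwa [isOccurrence12_insert_zero_iff ha, isOccurrence12_insert_zero_iff ha,
    isOccurrence12_insert_zero_iff ha]

end IsOccurrence12

/-- Under the dominating pattern 321, the mesh patterns
`(12, {⟨0,0⟩,⟨0,2⟩,⟨1,1⟩,⟨1,2⟩,⟨2,1⟩})` and
`(12, {⟨0,0⟩,⟨0,1⟩,⟨0,2⟩,⟨1,1⟩,⟨1,2⟩,⟨2,1⟩})` are coincident. -/
theorem coincidence_321_12_patterns {n : ℕ} (π : Equiv.Perm (Fin n))
    (h : Avoids321 π) :
    AvoidsMesh (1 : Equiv.Perm (Fin 2))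
        ({(0,0),(0,2),(1,1),(1,2),(2,1)} : Finset (ℕ × ℕ)) π ↔
      AvoidsMesh (1 : Equiv.Perm (Fin 2))
        ({(0,0),(0,1),(0,2),(1,1),(1,2),(2,1)} : Finset (ℕ × ℕ)) π :=
  ⟨fun h₁ h₂ => h₁ (h₂.mono (by decide)),
    fun h₂ h₁ => h₂ (h.containsMesh_R₂_of_containsMesh_R₁ h₁)⟩
end

section
/- The number of permutations of length n avoiding 231 and the mesh pattern (12, {⟨1,0⟩,⟨1,1⟩,⟨1,2⟩,⟨2,0⟩,⟨2,1⟩}) equals the number of permutations of length n avoiding 231 and the mesh pattern (21, {⟨0,1⟩,⟨1,0⟩,⟨1,1⟩,⟨1,2⟩,⟨2,1⟩}); i.e., these two mesh patterns are Wilf-equivalent under the dominating pattern 231. -/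
/-- `π` avoids the classical pattern 231. -/
def Avoids231 {n : ℕ} (π : Equiv.Perm (Fin n)) : Prop :=
  ¬ ∃ i j k : Fin n, i < j ∧ j < k ∧ π k < π i ∧ π i < π j

/-!
A 231-avoiding permutation has the form `L n R` where every entry of `L` is smaller than every
entry of `R`, and `L`, `R` (standardized) are again 231-avoiding. Occurrences of both mesh
patterns split along this decomposition. The first pattern is an adjacent ascent whose top lies
below everything to its right: it occurs in `L n R` iff it occurs in `L` or in `R`, or `L` is
nonempty while `R` is empty. The second pattern is an adjacent descent between consecutive
values: it occurs iff it occurs in `L` or in `R`, or `R` starts with its maximum. The resulting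
convolution recurrences show that both counts `x n` satisfy `x 0 = x 1 = 1` and
`x (m + 2) + x (m + 1) = ∑_{p + q = m + 1} x p * x q`, so they agree.
-/

open List

def Contains231 (w : List ℕ) : Prop := ∃ a b c, [a, b, c] <+ w ∧ c < a ∧ a < b

-- Occurrences of the two mesh patterns, read on the word of values of a permutation.
def HasAscentBelowSuffix (w : List ℕ) : Prop :=
  ∃ u v a b, w = u ++ a :: b :: v ∧ a < b ∧ ∀ x ∈ v, b < x

def HasUnitDescent (w : List ℕ) : Prop :=
  ∃ u v a b, w = u ++ a :: b :: v ∧ b < a ∧ ∀ x ∈ w, ¬(b < x ∧ x < a)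

def StartsWithMax (w : List ℕ) : Prop := ∃ a t, w = a :: t ∧ ∀ x ∈ t, x ≤ a

theorem exists_eq_append_cons_cons_iff {α : Type*} {w : List α} {P : α → α → List α → Prop} :
    (∃ u v a b, w = u ++ a :: b :: v ∧ P a b v) ↔
      ∃ i, ∃ h : i + 1 < w.length, P w[i] w[i + 1] (w.drop (i + 2)) := by
  constructor
  · rintro ⟨u, v, a, b, rfl, h⟩
    refine ⟨u.length, by simp, ?_⟩
    simpa [Nat.add_comm 1] using h
  · rintro ⟨i, hi, h⟩
    refine ⟨w.take i, w.drop (i + 2), w[i], w[i + 1], ?_, h⟩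
    conv_lhs => rw [← take_append_drop i w]
    rw [drop_eq_getElem_cons (by omega), drop_eq_getElem_cons (by omega)]

theorem append_cons_cons_eq_append_cons_iff {α : Type*} {u v L R : List α} {a b M : α} :
    u ++ a :: b :: v = L ++ M :: R ↔
      (∃ v', L = u ++ a :: b :: v' ∧ v = v' ++ M :: R) ∨ (L = u ++ [a] ∧ b = M ∧ v = R) ∨
        (u = L ∧ a = M ∧ R = b :: v) ∨ ∃ u', u = L ++ M :: u' ∧ R = u' ++ a :: b :: v := by
  constructor
  · intro h
    rcases append_eq_append_iff.1 h with ⟨r, rfl, hr⟩ | ⟨c, rfl, hc⟩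
    · rcases r with _ | ⟨x, _ | ⟨y, r⟩⟩ <;> simp only [nil_append, cons_append, cons.injEq] at hr
      · simp [hr]
      · simp [hr]
      · obtain ⟨rfl, rfl, rfl⟩ := hr; simp
    · rcases c with _ | ⟨x, c⟩ <;> simp only [nil_append, cons_append, cons.injEq] at hc
      · simp [hc]
      · obtain ⟨rfl, rfl⟩ := hc; simp
  · rintro (⟨v', rfl, rfl⟩ | ⟨rfl, rfl, rfl⟩ | ⟨rfl, rfl, rfl⟩ | ⟨u', rfl, rfl⟩) <;> simp

theorem hasAscentBelowSuffix_iff_getElem {w : List ℕ} :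
    HasAscentBelowSuffix w ↔
      ∃ i, ∃ h : i + 1 < w.length, w[i] < w[i + 1] ∧ ∀ x ∈ w.drop (i + 2), w[i + 1] < x :=
  exists_eq_append_cons_cons_iff

theorem hasUnitDescent_iff_getElem {w : List ℕ} :
    HasUnitDescent w ↔
      ∃ i, ∃ h : i + 1 < w.length, w[i + 1] < w[i] ∧ ∀ x ∈ w, ¬(w[i + 1] < x ∧ x < w[i]) :=
  exists_eq_append_cons_cons_iff

theorem cons₃_sublist_map_iff {α β : Type*} {f : α → β} {l : List α} {a b c : β} :
    [a, b, c] <+ l.map f ↔ ∃ a' b' c', [a', b', c'] <+ l ∧ f a' = a ∧ f b' = b ∧ f c' = c := by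
  rw [sublist_map_iff]
  constructor
  · rintro ⟨l', hl', he⟩
    rcases l' with _ | ⟨a', _ | ⟨b', _ | ⟨c', _ | _⟩⟩⟩ <;>
      simp only [map_nil, map_cons, cons.injEq, reduceCtorEq, nil_eq, cons_ne_self, and_false,
        and_true] at he
    obtain ⟨rfl, rfl, rfl⟩ := he
    exact ⟨a', b', c', hl', rfl, rfl, rfl⟩
  · rintro ⟨a', b', c', hl', rfl, rfl, rfl⟩
    exact ⟨[a', b', c'], hl', rfl⟩

section Relabel

variable {f : ℕ → ℕ} {w : List ℕ}

theorem contains231_map (hf : StrictMono f) : Contains231 (w.map f) ↔ Contains231 w := by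
  simp [Contains231, cons₃_sublist_map_iff, hf.lt_iff_lt]

theorem hasAscentBelowSuffix_map (hf : StrictMono f) :
    HasAscentBelowSuffix (w.map f) ↔ HasAscentBelowSuffix w := by
  simp [hasAscentBelowSuffix_iff_getElem, ← map_drop, hf.lt_iff_lt]

theorem hasUnitDescent_map (hf : StrictMono f) :
    HasUnitDescent (w.map f) ↔ HasUnitDescent w := by
  simp [hasUnitDescent_iff_getElem, hf.lt_iff_lt, hf.le_iff_le]

theorem startsWithMax_map (hf : StrictMono f) : StartsWithMax (w.map f) ↔ StartsWithMax w := by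
  cases w <;> simp [StartsWithMax, hf.le_iff_le]

end Relabel

section MaxSplit

def IsMaxSplit (L : List ℕ) (M : ℕ) (R : List ℕ) : Prop :=
  (∀ x ∈ L, x < M) ∧ (∀ x ∈ R, x < M) ∧ ∀ a ∈ L, ∀ b ∈ R, a < b

variable {L R : List ℕ} {M : ℕ}

theorem IsMaxSplit.lt_of_mem_cons (h : IsMaxSplit L M R) {a b : ℕ} (ha : a ∈ L)
    (hb : b ∈ M :: R) : a < b := by
  rcases mem_cons.1 hb with rfl | hb
  exacts [h.1 a ha, h.2.2 a ha b hb]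

theorem contains231_append_cons (h : IsMaxSplit L M R) :
    Contains231 (L ++ M :: R) ↔ Contains231 L ∨ Contains231 R := by
  constructor
  · rintro ⟨a, b, c, hs, hca, hab⟩
    obtain ⟨s₁, s₂, hs₁₂, hL, hMR⟩ := sublist_append_iff.1 hs
    have h_ac (hc : c ∈ s₂) (ha : a ∈ s₁) : False :=
      absurd (h.lt_of_mem_cons (hL.subset ha) (hMR.subset hc)) (by omega)
    rcases s₁ with _ | ⟨x, _ | ⟨y, _ | ⟨z, _ | ⟨_, _⟩⟩⟩⟩ <;>
      simp only [nil_append, cons_append, cons.injEq, reduceCtorEq, and_false] at hs₁₂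
    · subst hs₁₂
      rcases sublist_cons_iff.1 hMR with hR | ⟨r, hr, hR⟩
      · exact Or.inr ⟨a, b, c, hR, hca, hab⟩
      · obtain ⟨rfl, rfl⟩ := cons.inj hr
        exact absurd (h.2.1 b (hR.subset (by simp))) (by omega)
    · obtain ⟨rfl, rfl⟩ := hs₁₂
      exact (h_ac (by simp) (by simp)).elim
    · obtain ⟨rfl, rfl, rfl⟩ := hs₁₂
      exact (h_ac (by simp) (by simp)).elim
    · obtain ⟨rfl, rfl, rfl, -⟩ := hs₁₂
      exact Or.inl ⟨a, b, c, hL, hca, hab⟩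
  · rintro (⟨a, b, c, hs, hca, hab⟩ | ⟨a, b, c, hs, hca, hab⟩)
    · exact ⟨a, b, c, hs.trans (sublist_append_left _ _), hca, hab⟩
    · exact ⟨a, b, c, hs.trans ((sublist_cons_self _ _).trans (sublist_append_right _ _)),
        hca, hab⟩

theorem hasAscentBelowSuffix_append_cons (h : IsMaxSplit L M R) :
    HasAscentBelowSuffix (L ++ M :: R) ↔
      HasAscentBelowSuffix L ∨ HasAscentBelowSuffix R ∨ (L ≠ [] ∧ R = []) := by
  constructor
  · rintro ⟨u, v, a, b, he, hab, hv⟩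
    rcases append_cons_cons_eq_append_cons_iff.1 he.symm with
      ⟨v, rfl, rfl⟩ | ⟨rfl, rfl, rfl⟩ | ⟨rfl, rfl, rfl⟩ | ⟨u, rfl, rfl⟩
    · exact Or.inl ⟨u, v, a, b, rfl, hab, fun x hx => hv x (by simp [hx])⟩
    · refine Or.inr (Or.inr ⟨by simp, eq_nil_iff_forall_not_mem.2 fun x hx => ?_⟩)
      exact absurd (hv x hx) (not_lt.2 (h.2.1 x hx).le)
    · exact absurd (h.2.1 b (by simp)) (not_lt.2 hab.le)
    · exact Or.inr (Or.inl ⟨u, v, a, b, rfl, hab, hv⟩)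
  · rintro (⟨u, v, a, b, rfl, hab, hv⟩ | ⟨u, v, a, b, rfl, hab, hv⟩ | ⟨hL, rfl⟩)
    · refine ⟨u, v ++ M :: R, a, b, by simp, hab, fun x hx => ?_⟩
      rcases mem_append.1 hx with hx | hx
      exacts [hv x hx, h.lt_of_mem_cons (by simp) hx]
    · exact ⟨L ++ M :: u, v, a, b, by simp, hab, hv⟩
    · obtain ⟨u, a, rfl⟩ := (eq_nil_or_concat' L).resolve_left hL
      exact ⟨u, [], a, M, by simp, h.1 a (by simp), by simp⟩

theorem hasUnitDescent_append_cons (h : IsMaxSplit L M R) :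
    HasUnitDescent (L ++ M :: R) ↔
      HasUnitDescent L ∨ HasUnitDescent R ∨ StartsWithMax R := by
  constructor
  · rintro ⟨u, v, a, b, he, hba, hw⟩
    rcases append_cons_cons_eq_append_cons_iff.1 he.symm with
      ⟨v, rfl, rfl⟩ | ⟨rfl, rfl, rfl⟩ | ⟨rfl, rfl, rfl⟩ | ⟨u, rfl, rfl⟩
    · exact Or.inl ⟨u, v, a, b, rfl, hba, fun x hx => hw x (mem_append_left _ hx)⟩
    · exact absurd (h.1 a (by simp)) (not_lt.2 hba.le)
    · refine Or.inr (Or.inr ⟨b, v, rfl, fun x hx => ?_⟩)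
      have := hw x (by simp [hx])
      have := h.2.1 x (by simp [hx])
      omega
    · exact Or.inr (Or.inl ⟨u, v, a, b, rfl, hba, fun x hx => hw x (by simp [hx])⟩)
  · rintro (⟨u, v, a, b, rfl, hba, hw⟩ | ⟨u, v, a, b, rfl, hba, hw⟩ | ⟨b, t, rfl, ht⟩)
    · refine ⟨u, v ++ M :: R, a, b, by simp, hba, fun x hx => ?_⟩
      rcases mem_append.1 hx with hx | hx
      exacts [hw x hx, fun hx' => absurd (h.lt_of_mem_cons (by simp) hx) (not_lt.2 hx'.2.le)]
    · refine ⟨L ++ M :: u, v, a, b, by simp, hba, fun x hx => ?_⟩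
      rcases mem_append.1 hx with hx | hx
      · exact fun hx' => absurd (h.2.2 x hx b (by simp)) (not_lt.2 hx'.1.le)
      · rcases mem_cons.1 hx with rfl | hx
        exacts [fun hx' => absurd (h.2.1 a (by simp)) (not_lt.2 hx'.2.le), hw x hx]
    · have hR : ∀ x ∈ b :: t, x ≤ b := forall_mem_cons.2 ⟨le_rfl, ht⟩
      refine ⟨L, t, M, b, rfl, h.2.1 b (by simp), fun x hx hx' => ?_⟩
      rcases mem_append.1 hx with hx | hx
      · exact absurd (h.2.2 x hx b (by simp)) (not_lt.2 hx'.1.le)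
      · rcases mem_cons.1 hx with rfl | hx
        exacts [lt_irrefl _ hx'.2, not_lt.2 (hR x hx) hx'.1]

end MaxSplit

section Glue

def AvoidsPat₁ (w : List ℕ) : Prop := ¬Contains231 w ∧ ¬HasAscentBelowSuffix w

def AvoidsPat₂ (w : List ℕ) : Prop := ¬Contains231 w ∧ ¬HasUnitDescent w

def AvoidsPat₂' (w : List ℕ) : Prop := AvoidsPat₂ w ∧ ¬StartsWithMax w

def glue (L R : List ℕ) : List ℕ := L ++ (L.length + R.length) :: R.map (· + L.length)

variable {L R : List ℕ}

theorem isMaxSplit_glue (hL : ∀ x ∈ L, x < L.length) (hR : ∀ x ∈ R, x < R.length) :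
    IsMaxSplit L (L.length + R.length) (R.map (· + L.length)) := by
  refine ⟨fun x hx => ?_, fun x hx => ?_, fun a ha b hb => ?_⟩
  · have := hL x hx; omega
  · obtain ⟨y, hy, rfl⟩ := mem_map.1 hx; have := hR y hy; omega
  · obtain ⟨y, -, rfl⟩ := mem_map.1 hb; have := hL a ha; omega

theorem contains231_glue (hL : ∀ x ∈ L, x < L.length) (hR : ∀ x ∈ R, x < R.length) :
    Contains231 (glue L R) ↔ Contains231 L ∨ Contains231 R := by
  rw [glue, contains231_append_cons (isMaxSplit_glue hL hR),
    contains231_map add_left_strictMono]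

theorem startsWithMax_glue (hL : ∀ x ∈ L, x < L.length) (hR : ∀ x ∈ R, x < R.length) :
    StartsWithMax (glue L R) ↔ L = [] := by
  rcases L with _ | ⟨a, L⟩
  · simpa [glue, StartsWithMax] using fun x hx => (hR x hx).le
  · simp only [glue, StartsWithMax, cons_append, cons.injEq, reduceCtorEq, iff_false]
    rintro ⟨_, _, ⟨rfl, rfl⟩, h⟩
    have h₁ := hL a mem_cons_self
    have h₂ := h _ (mem_append_right _ mem_cons_self)
    simp only [length_cons] at h₁ h₂
    omega

theorem avoidsPat₁_glue (hL : ∀ x ∈ L, x < L.length) (hR : ∀ x ∈ R, x < R.length) :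
    AvoidsPat₁ (glue L R) ↔ AvoidsPat₁ L ∧ AvoidsPat₁ R ∧ (R = [] → L = []) := by
  rw [AvoidsPat₁, AvoidsPat₁, AvoidsPat₁, contains231_glue hL hR, glue,
    hasAscentBelowSuffix_append_cons (isMaxSplit_glue hL hR),
    hasAscentBelowSuffix_map add_left_strictMono, map_eq_nil_iff]
  tauto

theorem avoidsPat₂_glue (hL : ∀ x ∈ L, x < L.length) (hR : ∀ x ∈ R, x < R.length) :
    AvoidsPat₂ (glue L R) ↔ AvoidsPat₂ L ∧ AvoidsPat₂' R := by
  rw [AvoidsPat₂', AvoidsPat₂, AvoidsPat₂, AvoidsPat₂, contains231_glue hL hR, glue,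
    hasUnitDescent_append_cons (isMaxSplit_glue hL hR),
    hasUnitDescent_map add_left_strictMono, startsWithMax_map add_left_strictMono]
  tauto

theorem avoidsPat₂'_glue (hL : ∀ x ∈ L, x < L.length) (hR : ∀ x ∈ R, x < R.length) :
    AvoidsPat₂' (glue L R) ↔ AvoidsPat₂ L ∧ AvoidsPat₂' R ∧ L ≠ [] := by
  rw [AvoidsPat₂', avoidsPat₂_glue hL hR, startsWithMax_glue hL hR]
  tauto

end Glue

section Count

open Finset.HasAntidiagonal (antidiagonal mem_antidiagonal)

open scoped Classical

noncomputable def perms (n : ℕ) : Finset (List ℕ) := (range n).permutations.toFinset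

noncomputable def permCount (P : List ℕ → Prop) (n : ℕ) : ℕ := ((perms n).filter P).card

variable {L R w : List ℕ} {m n : ℕ}

theorem mem_perms : w ∈ perms n ↔ w ~ range n := by
  simp [perms]

theorem lt_of_perm_range (hw : w ~ range n) {x : ℕ} (hx : x ∈ w) : x < n :=
  mem_range.1 (hw.subset hx)

theorem length_eq_of_perm_range (hw : w ~ range n) : w.length = n := by
  simpa using hw.length_eq

theorem perm_range_of_nodup (hw : w.Nodup) (hlt : ∀ x ∈ w, x < w.length) :
    w ~ range w.length :=
  (hw.subperm fun x hx => mem_range.2 (hlt x hx)).perm_of_length_le (by simp)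

theorem glue_perm_range (hL : L ~ range L.length) (hR : R ~ range R.length) :
    glue L R ~ range (L.length + R.length + 1) := by
  have hLR : L ++ R.map (· + L.length) ~ range (L.length + R.length) := by
    rw [range_add]
    refine hL.append ((hR.map _).trans ?_)
    simp only [Nat.add_comm _ L.length, Perm.refl]
  rw [range_succ]
  exact perm_middle.trans ((hLR.cons _).trans (perm_append_singleton _ _).symm)

theorem glue_inj {L' R' : List ℕ} (hL : ∀ x ∈ L, x < L.length) (hR : ∀ x ∈ R, x < R.length)
    (h : glue L R = glue L' R') : L = L' ∧ R = R' := by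
  have hlen : L.length + R.length = L'.length + R'.length := by
    have := congrArg length h
    simp only [glue, length_append, length_cons, length_map] at this
    omega
  rw [glue, glue, ← hlen, append_cons_inj_of_notMem (fun hM => by have := hL _ hM; omega)
    (fun hM => by obtain ⟨y, hy, hyM⟩ := mem_map.1 hM; have := hR y hy; omega)] at h
  obtain ⟨rfl, -, hR⟩ := h
  exact ⟨rfl, map_injective_iff.2 (add_left_injective _) hR⟩

theorem isMaxSplit_of_not_contains231 (hw : L ++ m :: R ~ range (m + 1))
    (h : ¬Contains231 (L ++ m :: R)) : IsMaxSplit L m R := by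
  obtain ⟨hndL, hndR, hdisj⟩ := nodup_append.1 (hw.nodup_iff.2 nodup_range)
  have hlt : ∀ x ∈ L ++ m :: R, x < m + 1 := fun x hx => lt_of_perm_range hw hx
  have hL : ∀ x ∈ L, x < m := fun x hx => by
    have := hlt x (by simp [hx]); have := hdisj x hx m mem_cons_self; omega
  have hR : ∀ x ∈ R, x < m := fun x hx => by
    have := hlt x (by simp [hx])
    have : x ≠ m := fun h => (nodup_cons.1 hndR).1 (h ▸ hx)
    omega
  refine ⟨hL, hR, fun a ha b hb => ?_⟩
  by_contra hba
  have := hdisj a ha b (mem_cons_of_mem _ hb)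
  exact h ⟨a, m, b, (singleton_sublist.2 ha).append ((singleton_sublist.2 hb).cons_cons m),
    by omega, hL a ha⟩

theorem exists_glue_of_not_contains231 (hw : w ~ range (m + 1)) (h : ¬Contains231 w) :
    ∃ L R, L ~ range L.length ∧ R ~ range R.length ∧ w = glue L R := by
  obtain ⟨L, R', rfl⟩ := append_of_mem (hw.mem_iff.2 (mem_range.2 m.lt_succ_self))
  have hsplit := isMaxSplit_of_not_contains231 hw h
  obtain ⟨hndL, hndR, -⟩ := nodup_append.1 (hw.nodup_iff.2 nodup_range)
  -- a value below an entry of `L` cannot lie in `R`, so `L` holds all of them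
  have hL : ∀ x ∈ L, x < L.length := fun x hx => by
    have hxm := hsplit.1 x hx
    have hsub : range (x + 1) ⊆ L := fun y hy => by
      have hyx : y ≤ x := Nat.lt_succ_iff.1 (mem_range.1 hy)
      rcases mem_append.1 (hw.mem_iff.2 (mem_range.2 (show y < m + 1 by omega))) with hyL | hyR
      · exact hyL
      · rcases mem_cons.1 hyR with rfl | hyR
        · omega
        · have := hsplit.2.2 x hx y hyR; omega
    simpa using (nodup_range.subperm hsub).length_le
  have hLperm := perm_range_of_nodup hndL hL
  have hR'ge : ∀ y ∈ R', L.length ≤ y := fun y hy => by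
    by_contra hlt
    have := hsplit.2.2 y (hLperm.mem_iff.2 (mem_range.2 (by omega))) y hy
    omega
  obtain ⟨R, rfl⟩ : ∃ R : List ℕ, R' = R.map (· + L.length) := by
    refine ⟨R'.map (· - L.length), ?_⟩
    rw [map_map]
    conv_lhs => rw [← map_id R']
    exact map_congr_left fun y hy => (Nat.sub_add_cancel (hR'ge y hy)).symm
  obtain rfl : m = L.length + R.length := by
    have := hw.length_eq
    simp only [length_append, length_cons, length_map, length_range] at this
    omega
  refine ⟨L, R, hLperm, perm_range_of_nodup ((nodup_cons.1 hndR).2.of_map _) fun x hx => ?_, rfl⟩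
  have := hsplit.2.1 _ (mem_map_of_mem hx)
  omega

theorem permCount_zero {P : List ℕ → Prop} (h : P []) : permCount P 0 = 1 := by
  rw [permCount, perms, range_zero, permutations_nil]
  simp [Finset.filter_singleton, h]

theorem permCount_succ {P PL PR : List ℕ → Prop} {Q : ℕ × ℕ → Prop}
    [DecidablePred Q] (h231 : ∀ w, P w → ¬Contains231 w)
    (hglue : ∀ L R, L ~ range L.length → R ~ range R.length →
      (P (glue L R) ↔ PL L ∧ PR R ∧ Q (L.length, R.length))) (m : ℕ) :
    permCount P (m + 1) =
      ∑ pq ∈ (antidiagonal m).filter Q,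
        permCount PL pq.1 * permCount PR pq.2 := by
  simp only [permCount]
  rw [Finset.sum_congr rfl fun pq _ => (Finset.card_product _ _).symm,
    ← Finset.card_sigma]
  symm
  refine Finset.card_bij (fun x _ => glue x.2.1 x.2.2) ?_ ?_ ?_
  · rintro ⟨⟨p, q⟩, L, R⟩ hx
    simp only [Finset.mem_sigma, Finset.mem_filter, mem_antidiagonal, Finset.mem_product,
      mem_perms] at hx ⊢
    obtain ⟨⟨rfl, hQ⟩, ⟨hL, hPL⟩, hR, hPR⟩ := hx
    obtain rfl := length_eq_of_perm_range hL
    obtain rfl := length_eq_of_perm_range hR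
    exact ⟨glue_perm_range hL hR, (hglue L R hL hR).2 ⟨hPL, hPR, hQ⟩⟩
  · rintro ⟨⟨p, q⟩, L, R⟩ hx ⟨⟨p', q'⟩, L', R'⟩ hx' h
    simp only [Finset.mem_sigma, Finset.mem_filter, mem_antidiagonal, Finset.mem_product,
      mem_perms] at hx hx'
    obtain ⟨-, ⟨hL, -⟩, hR, -⟩ := hx
    obtain ⟨-, ⟨hL', -⟩, hR', -⟩ := hx'
    obtain rfl := length_eq_of_perm_range hL
    obtain rfl := length_eq_of_perm_range hR
    obtain ⟨rfl, rfl⟩ := glue_inj (fun _ => lt_of_perm_range hL) (fun _ => lt_of_perm_range hR) h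
    rw [length_eq_of_perm_range hL', length_eq_of_perm_range hR']
  · intro w hw
    simp only [Finset.mem_filter, mem_perms] at hw
    obtain ⟨L, R, hL, hR, rfl⟩ := exists_glue_of_not_contains231 hw.1 (h231 w hw.2)
    obtain ⟨hPL, hPR, hQ⟩ := (hglue L R hL hR).1 hw.2
    refine ⟨⟨(L.length, R.length), L, R⟩, ?_, rfl⟩
    simp only [Finset.mem_sigma, Finset.mem_filter, mem_antidiagonal, Finset.mem_product,
      mem_perms]
    have hlen := hw.1.length_eq
    simp only [glue, length_append, length_cons, length_map, length_range] at hlen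
    exact ⟨⟨by omega, hQ⟩, ⟨hL, hPL⟩, hR, hPR⟩

end Count

section Recurrence

open Finset.HasAntidiagonal (antidiagonal mem_antidiagonal)

/-- For `n ≥ 1`, `x n` is the Motzkin number `M (n - 1)`. -/
def IsShiftedMotzkin (x : ℕ → ℕ) : Prop :=
  x 0 = 1 ∧ x 1 = 1 ∧
    ∀ m, x (m + 2) + x (m + 1) = ∑ pq ∈ antidiagonal (m + 1), x pq.1 * x pq.2

theorem IsShiftedMotzkin.unique {x y : ℕ → ℕ} (hx : IsShiftedMotzkin x)
    (hy : IsShiftedMotzkin y) : x = y := by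
  funext n
  induction n using Nat.strong_induction_on with
  | _ n ih =>
    match n, ih with
    | 0, _ => rw [hx.1, hy.1]
    | 1, _ => rw [hx.2.1, hy.2.1]
    | m + 2, ih =>
      have hsum : ∑ pq ∈ antidiagonal (m + 1), x pq.1 * x pq.2 =
          ∑ pq ∈ antidiagonal (m + 1), y pq.1 * y pq.2 :=
        Finset.sum_congr rfl fun pq hpq => by
          rw [mem_antidiagonal] at hpq
          rw [ih pq.1 (by omega), ih pq.2 (by omega)]
      have := hx.2.2 m
      have := hy.2.2 m
      have := ih (m + 1) (by omega)
      omega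

theorem isShiftedMotzkin_of_sum_filter {a : ℕ → ℕ} (h0 : a 0 = 1)
    (h : ∀ m, a (m + 1) = ∑ pq ∈ (antidiagonal m).filter (fun pq => pq.2 = 0 → pq.1 = 0),
      a pq.1 * a pq.2) :
    IsShiftedMotzkin a := by
  refine ⟨h0, by simp [h, Finset.sum_filter, h0], fun m => ?_⟩
  rw [h, Finset.sum_filter, Finset.Nat.sum_antidiagonal_succ', Finset.Nat.sum_antidiagonal_succ']
  simp [h0, add_comm]

theorem isShiftedMotzkin_of_sum_mul {b c : ℕ → ℕ} (hb0 : b 0 = 1) (hc0 : c 0 = 1)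
    (hb : ∀ m, b (m + 1) = ∑ pq ∈ antidiagonal m, b pq.1 * c pq.2)
    (hbc : ∀ m, b (m + 1) = c (m + 1) + c m) :
    IsShiftedMotzkin b := by
  refine ⟨hb0, by simp [hb, hb0, hc0], fun m => ?_⟩
  calc b (m + 2) + b (m + 1)
      = b (m + 1) + ∑ pq ∈ antidiagonal m, b pq.1 * c (pq.2 + 1) +
          ∑ pq ∈ antidiagonal m, b pq.1 * c pq.2 := by
        rw [hb (m + 1), Finset.Nat.sum_antidiagonal_succ', hb m, hc0, mul_one]
    _ = b (m + 1) * b 0 + ∑ pq ∈ antidiagonal m, b pq.1 * b (pq.2 + 1) := by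
        simp only [hbc, mul_add, Finset.sum_add_distrib, hb0, mul_one, add_assoc]
    _ = ∑ pq ∈ antidiagonal (m + 1), b pq.1 * b pq.2 := by rw [Finset.Nat.sum_antidiagonal_succ']

theorem avoidsPat₁_nil : AvoidsPat₁ [] := by
  simp [AvoidsPat₁, Contains231, HasAscentBelowSuffix]

theorem avoidsPat₂'_nil : AvoidsPat₂' [] := by
  simp [AvoidsPat₂', AvoidsPat₂, Contains231, HasUnitDescent, StartsWithMax]

theorem permCount_avoidsPat₁_succ (m : ℕ) :
    permCount AvoidsPat₁ (m + 1) =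
      ∑ pq ∈ (antidiagonal m).filter (fun pq => pq.2 = 0 → pq.1 = 0),
        permCount AvoidsPat₁ pq.1 * permCount AvoidsPat₁ pq.2 := by
  refine permCount_succ (P := AvoidsPat₁) (fun _ h => h.1) (fun L R hL hR => ?_) m
  rw [avoidsPat₁_glue (fun _ => lt_of_perm_range hL) (fun _ => lt_of_perm_range hR),
    length_eq_zero_iff, length_eq_zero_iff]

theorem permCount_avoidsPat₂_succ (m : ℕ) :
    permCount AvoidsPat₂ (m + 1) =
      ∑ pq ∈ antidiagonal m, permCount AvoidsPat₂ pq.1 * permCount AvoidsPat₂' pq.2 := by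
  rw [permCount_succ (P := AvoidsPat₂) (Q := fun _ => True) (fun _ h => h.1) (fun L R hL hR => by
    rw [avoidsPat₂_glue (fun _ => lt_of_perm_range hL) (fun _ => lt_of_perm_range hR),
      and_true]) m, Finset.filter_true]

theorem permCount_avoidsPat₂'_succ (m : ℕ) :
    permCount AvoidsPat₂' (m + 1) =
      ∑ pq ∈ (antidiagonal m).filter (fun pq => pq.1 ≠ 0),
        permCount AvoidsPat₂ pq.1 * permCount AvoidsPat₂' pq.2 := by
  refine permCount_succ (P := AvoidsPat₂') (fun _ h => h.1.1) (fun L R hL hR => ?_) m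
  simp only [avoidsPat₂'_glue (fun _ => lt_of_perm_range hL) (fun _ => lt_of_perm_range hR),
    ne_eq, length_eq_zero_iff]

theorem permCount_avoidsPat₂_succ_eq (m : ℕ) :
    permCount AvoidsPat₂ (m + 1) = permCount AvoidsPat₂' (m + 1) + permCount AvoidsPat₂' m := by
  rw [permCount_avoidsPat₂_succ, permCount_avoidsPat₂'_succ,
    ← Finset.sum_filter_add_sum_filter_not _ (fun pq => pq.1 ≠ 0)]
  simp [Finset.sum_filter, Finset.Nat.sum_antidiagonal_eq_sum_range_succ_mk,
    permCount_zero avoidsPat₂'_nil.1]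

theorem isShiftedMotzkin_permCount_avoidsPat₁ : IsShiftedMotzkin (permCount AvoidsPat₁) :=
  isShiftedMotzkin_of_sum_filter (permCount_zero avoidsPat₁_nil) permCount_avoidsPat₁_succ

theorem isShiftedMotzkin_permCount_avoidsPat₂ : IsShiftedMotzkin (permCount AvoidsPat₂) :=
  isShiftedMotzkin_of_sum_mul (permCount_zero avoidsPat₂'_nil.1) (permCount_zero avoidsPat₂'_nil)
    permCount_avoidsPat₂_succ permCount_avoidsPat₂_succ_eq

end Recurrence

section Permutations

variable {n : ℕ}

def wordOf (π : Equiv.Perm (Fin n)) : List ℕ := ofFn fun i => (π i : ℕ)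

@[simp] theorem length_wordOf (π : Equiv.Perm (Fin n)) : (wordOf π).length = n := by
  simp [wordOf]

@[simp] theorem getElem_wordOf (π : Equiv.Perm (Fin n)) (i : ℕ) (h : i < (wordOf π).length) :
    (wordOf π)[i] = π ⟨i, by simpa using h⟩ := by
  simp [wordOf]

theorem mem_wordOf (π : Equiv.Perm (Fin n)) {y : ℕ} :
    y ∈ wordOf π ↔ ∃ x : Fin n, (π x : ℕ) = y := by
  simp [wordOf]

theorem wordOf_perm_range (π : Equiv.Perm (Fin n)) : wordOf π ~ range n := by
  simpa using perm_range_of_nodup (w := wordOf π)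
    (nodup_ofFn.2 (Fin.val_injective.comp π.injective)) (by simp [mem_wordOf])

theorem wordOf_injective : Function.Injective (wordOf (n := n)) := fun _ _ h =>
  Equiv.ext fun i => Fin.ext (congrFun (ofFn_inj.1 h) i)

theorem exists_wordOf_eq {w : List ℕ} (hw : w ~ range n) :
    ∃ π : Equiv.Perm (Fin n), wordOf π = w := by
  have hlen := length_eq_of_perm_range hw
  have hnd : w.Nodup := hw.nodup_iff.2 nodup_range
  let f : Fin n → Fin n := fun i => ⟨w[i.1], lt_of_perm_range hw (getElem_mem _)⟩
  have hf : Function.Injective f := fun i j h =>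
    Fin.ext ((hnd.getElem_inj_iff).1 (congrArg Fin.val h))
  refine ⟨Equiv.ofBijective f hf.bijective_of_finite, ext_getElem (by simp [wordOf, hlen]) ?_⟩
  intro i _ _
  simp [wordOf, f]

theorem natCard_eq_permCount {P : Equiv.Perm (Fin n) → Prop} {G : List ℕ → Prop}
    (h : ∀ π, P π ↔ G (wordOf π)) : Nat.card {π // P π} = permCount G n := by
  classical
  rw [Nat.card_eq_fintype_card, Fintype.card_subtype, permCount]
  refine Finset.card_bij (fun π _ => wordOf π) (fun π hπ => ?_)
    (fun _ _ _ _ e => wordOf_injective e) (fun w hw => ?_)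
  · simp only [Finset.mem_filter, Finset.mem_univ, true_and] at hπ
    simpa [mem_perms, wordOf_perm_range, ← h] using hπ
  · simp only [Finset.mem_filter, mem_perms] at hw
    obtain ⟨π, rfl⟩ := exists_wordOf_eq hw.1
    exact ⟨π, by simpa [h] using hw.2, rfl⟩

theorem sublist_finRange_iff {l : List (Fin n)} : l <+ finRange n ↔ l.Pairwise (· < ·) :=
  ⟨fun h => (pairwise_lt_finRange n).sublist h, fun h =>
    sublist_of_subperm_of_pairwise (h.nodup.subperm fun i _ => mem_finRange i) h
      (pairwise_lt_finRange n)⟩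

theorem avoids231_iff_not_contains231_wordOf (π : Equiv.Perm (Fin n)) :
    Avoids231 π ↔ ¬Contains231 (wordOf π) := by
  rw [Avoids231, Contains231, wordOf, ofFn_eq_map, not_iff_not]
  constructor
  · rintro ⟨i, j, k, hij, hjk, hki, hij'⟩
    refine ⟨π i, π j, π k, cons₃_sublist_map_iff.2 ⟨i, j, k, ?_, rfl, rfl, rfl⟩, hki, hij'⟩
    exact sublist_finRange_iff.2 (by simp [hij, hjk, hij.trans hjk])
  · rintro ⟨_, _, _, hs, hca, hab⟩
    obtain ⟨i, j, k, hl, rfl, rfl, rfl⟩ := cons₃_sublist_map_iff.1 hs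
    have hp := sublist_finRange_iff.1 hl
    exact ⟨i, j, k, (pairwise_cons.1 hp).1 j (by simp),
      (pairwise_cons.1 (pairwise_cons.1 hp).2).1 k (by simp), hca, hab⟩

theorem mem_drop_wordOf (π : Equiv.Perm (Fin n)) {k y : ℕ} :
    y ∈ (wordOf π).drop k ↔ ∃ x : Fin n, k ≤ x ∧ (π x : ℕ) = y := by
  rw [mem_drop_iff_getElem]
  constructor
  · rintro ⟨j, hj, rfl⟩
    exact ⟨⟨k + j, by simpa [Nat.add_comm] using hj⟩, by simp, by simp⟩
  · rintro ⟨x, hx, rfl⟩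
    exact ⟨x - k, by simp only [length_wordOf]; omega, by simp [Nat.add_sub_cancel' hx]⟩

theorem hasAscentBelowSuffix_wordOf_iff (π : Equiv.Perm (Fin n)) :
    HasAscentBelowSuffix (wordOf π) ↔
      ∃ i j : Fin n, (i : ℕ) + 1 = j ∧ π i < π j ∧ ∀ x, j < x → π j < π x := by
  simp only [hasAscentBelowSuffix_iff_getElem, mem_drop_wordOf, length_wordOf, getElem_wordOf,
    forall_exists_index, and_imp, forall_apply_eq_imp_iff₂, Fin.lt_def]
  constructor
  · rintro ⟨i, hi, hlt, hafter⟩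
    exact ⟨⟨i, by omega⟩, ⟨i + 1, hi⟩, rfl, hlt, fun x hx => hafter x hx⟩
  · rintro ⟨i, ⟨j, hj⟩, rfl, hlt, hafter⟩
    exact ⟨i, hj, hlt, fun x hx => hafter x hx⟩

theorem hasUnitDescent_wordOf_iff (π : Equiv.Perm (Fin n)) :
    HasUnitDescent (wordOf π) ↔ ∃ i j : Fin n, (i : ℕ) + 1 = j ∧ (π j : ℕ) + 1 = π i := by
  simp only [hasUnitDescent_iff_getElem, length_wordOf, getElem_wordOf, mem_wordOf,
    forall_exists_index, forall_apply_eq_imp_iff, not_and, not_lt]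
  constructor
  · rintro ⟨i, hi, hlt, hgap⟩
    refine ⟨⟨i, by omega⟩, ⟨i + 1, hi⟩, rfl, ?_⟩
    by_contra hne
    have := hgap (π.symm ⟨π ⟨i + 1, hi⟩ + 1, by omega⟩)
    simp only [Equiv.apply_symm_apply] at this
    omega
  · rintro ⟨i, ⟨j, hj⟩, rfl, hv⟩
    refine ⟨i, hj, ?_⟩
    simp only [Fin.eta]
    exact ⟨by omega, fun a ha => by omega⟩

end Permutations

section Mesh

variable {n : ℕ}

theorem strictMono_vec_two {α : Type*} [Preorder α] {a b : α} (h : a < b) :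
    StrictMono ![a, b] :=
  Fin.strictMono_iff_lt_succ.2 (by simpa using h)

theorem extFun_zero {k : ℕ} (α : Fin k → Fin n) : extFun α 0 = 0 := rfl

theorem extFun_fin_two_one (α : Fin 2 → Fin n) : extFun α 1 = α 0 + 1 := rfl

theorem extFun_fin_two_two (α : Fin 2 → Fin n) : extFun α 2 = α 1 + 1 := rfl

theorem extFun_fin_two_three (α : Fin 2 → Fin n) : extFun α 3 = n + 1 := rfl

theorem MeshOcc.apply_ne {k : ℕ} {τ : Equiv.Perm (Fin k)} {R : Finset (ℕ × ℕ)}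
    {π : Equiv.Perm (Fin n)} {α β : Fin k → Fin n} (h : MeshOcc τ R π α β) {x : Fin n}
    (hx : ∀ i, x ≠ α i) (i : Fin k) : π x ≠ β i := by
  intro hxi
  apply hx (τ.symm i)
  apply π.injective
  rw [hxi, h.2.2.1, τ.apply_symm_apply]

variable {τ : Equiv.Perm (Fin 2)} {R : Finset (ℕ × ℕ)} {π : Equiv.Perm (Fin n)}
  {α β : Fin 2 → Fin n}

theorem MeshOcc.apply_ne_of_two (h : MeshOcc τ R π α β) {x : Fin n} (h₀ : x ≠ α 0)
    (h₁ : x ≠ α 1) : π x ≠ β 0 ∧ π x ≠ β 1 :=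
  have hx : ∀ i, x ≠ α i := Fin.forall_fin_two.2 ⟨h₀, h₁⟩
  ⟨h.apply_ne hx 0, h.apply_ne hx 1⟩

theorem MeshOcc.val_add_one_eq_of_column_one (h : MeshOcc τ R π α β) (h₀ : (1, 0) ∈ R)
    (h₁ : (1, 1) ∈ R) (h₂ : (1, 2) ∈ R) : (α 0 : ℕ) + 1 = α 1 := by
  have hα : α 0 < α 1 := h.1 (show (0 : Fin 2) < 1 by decide)
  have hβ : β 0 < β 1 := h.2.1 (show (0 : Fin 2) < 1 by decide)
  by_contra hgap
  set x : Fin n := ⟨α 0 + 1, by omega⟩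
  have hx : (x : ℕ) = α 0 + 1 := rfl
  obtain ⟨hx₀, hx₁⟩ := h.apply_ne_of_two (x := x) (by omega) (by omega)
  have hb₀ := h.2.2.2 _ h₀ x
  have hb₁ := h.2.2.2 _ h₁ x
  have hb₂ := h.2.2.2 _ h₂ x
  simp only [extFun_zero, extFun_fin_two_one, extFun_fin_two_two, extFun_fin_two_three,
    Nat.reduceAdd] at hb₀ hb₁ hb₂
  omega

theorem MeshOcc.val_add_one_eq_of_row_one (h : MeshOcc τ R π α β) (h₀ : (0, 1) ∈ R)
    (h₁ : (1, 1) ∈ R) (h₂ : (2, 1) ∈ R) : (β 0 : ℕ) + 1 = β 1 := by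
  have hα : α 0 < α 1 := h.1 (show (0 : Fin 2) < 1 by decide)
  have hβ : β 0 < β 1 := h.2.1 (show (0 : Fin 2) < 1 by decide)
  by_contra hgap
  set x : Fin n := π.symm ⟨β 0 + 1, by omega⟩
  have hx : (π x : ℕ) = β 0 + 1 := by simp [x]
  have hx₀ : x ≠ α 0 := fun e => by
    rcases Fin.exists_fin_two.1 ⟨τ 0, rfl⟩ with hτ | hτ <;>
      rw [e, h.2.2.1, hτ] at hx <;> omega
  have hx₁ : x ≠ α 1 := fun e => by
    rcases Fin.exists_fin_two.1 ⟨τ 1, rfl⟩ with hτ | hτ <;>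
      rw [e, h.2.2.1, hτ] at hx <;> omega
  have hb₀ := h.2.2.2 _ h₀ x
  have hb₁ := h.2.2.2 _ h₁ x
  have hb₂ := h.2.2.2 _ h₂ x
  simp only [extFun_zero, extFun_fin_two_one, extFun_fin_two_two, extFun_fin_two_three,
    Nat.reduceAdd] at hb₀ hb₁ hb₂
  omega

theorem containsMesh_12_iff :
    ContainsMesh (1 : Equiv.Perm (Fin 2))
      ({(1,0),(1,1),(1,2),(2,0),(2,1)} : Finset (ℕ × ℕ)) π ↔
      ∃ i j : Fin n, (i : ℕ) + 1 = j ∧ π i < π j ∧ ∀ x, j < x → π j < π x := by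
  constructor
  · rintro ⟨α, β, h⟩
    have hadj := h.val_add_one_eq_of_column_one (by simp) (by simp) (by simp)
    have hβ : β 0 < β 1 := h.2.1 (show (0 : Fin 2) < 1 by decide)
    have hπ₀ : π (α 0) = β 0 := h.2.2.1 0
    have hπ₁ : π (α 1) = β 1 := h.2.2.1 1
    refine ⟨α 0, α 1, hadj, hπ₀ ▸ hπ₁ ▸ hβ, fun x hx => ?_⟩
    obtain ⟨hx₀, hx₁⟩ := h.apply_ne_of_two (x := x) (by omega) (by omega)
    have hb₀ := h.2.2.2 (2, 0) (by simp) x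
    have hb₁ := h.2.2.2 (2, 1) (by simp) x
    simp only [extFun_zero, extFun_fin_two_one, extFun_fin_two_two, extFun_fin_two_three,
      Nat.reduceAdd] at hb₀ hb₁
    rw [hπ₁]
    omega
  · rintro ⟨i, j, hij, hπij, hafter⟩
    refine ⟨![i, j], ![π i, π j], strictMono_vec_two (by omega), strictMono_vec_two hπij,
      Fin.forall_fin_two.2 ⟨rfl, rfl⟩, ?_⟩
    simp only [Finset.mem_insert, Finset.mem_singleton, forall_eq_or_imp, forall_eq,
      extFun_zero, extFun_fin_two_one, extFun_fin_two_two, extFun_fin_two_three, Nat.reduceAdd,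
      Matrix.cons_val_zero, Matrix.cons_val_one]
    refine ⟨fun x hx => by omega, fun x hx => by omega, fun x hx => by omega,
      fun x hx => ?_, fun x hx => ?_⟩ <;> have := hafter x (by omega) <;> omega

theorem containsMesh_21_iff :
    ContainsMesh (Equiv.swap 0 1 : Equiv.Perm (Fin 2))
      ({(0,1),(1,0),(1,1),(1,2),(2,1)} : Finset (ℕ × ℕ)) π ↔
      ∃ i j : Fin n, (i : ℕ) + 1 = j ∧ (π j : ℕ) + 1 = π i := by
  constructor
  · rintro ⟨α, β, h⟩
    refine ⟨α 0, α 1, h.val_add_one_eq_of_column_one (by simp) (by simp) (by simp), ?_⟩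
    rw [show π (α 1) = β 0 from h.2.2.1 1, show π (α 0) = β 1 from h.2.2.1 0]
    exact h.val_add_one_eq_of_row_one (by simp) (by simp) (by simp)
  · rintro ⟨i, j, hij, hπij⟩
    refine ⟨![i, j], ![π j, π i], strictMono_vec_two (by omega), strictMono_vec_two (by omega),
      Fin.forall_fin_two.2 ⟨rfl, rfl⟩, ?_⟩
    simp only [Finset.mem_insert, Finset.mem_singleton, forall_eq_or_imp, forall_eq,
      extFun_zero, extFun_fin_two_one, extFun_fin_two_two, extFun_fin_two_three, Nat.reduceAdd,
      Matrix.cons_val_zero, Matrix.cons_val_one]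
    exact ⟨fun x hx => by omega, fun x hx => by omega, fun x hx => by omega,
      fun x hx => by omega, fun x hx => by omega⟩

end Mesh

/-- The mesh patterns `(12, {⟨1,0⟩,⟨1,1⟩,⟨1,2⟩,⟨2,0⟩,⟨2,1⟩})` and
`(21, {⟨0,1⟩,⟨1,0⟩,⟨1,1⟩,⟨1,2⟩,⟨2,1⟩})` are Wilf-equivalent under the
dominating pattern 231. -/
theorem wilf_equiv_12_21_under_231 (n : ℕ) :
    Nat.card {π : Equiv.Perm (Fin n) // Avoids231 π ∧
        AvoidsMesh (1 : Equiv.Perm (Fin 2))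
          ({(1,0),(1,1),(1,2),(2,0),(2,1)} : Finset (ℕ × ℕ)) π} =
      Nat.card {π : Equiv.Perm (Fin n) // Avoids231 π ∧
        AvoidsMesh (Equiv.swap 0 1 : Equiv.Perm (Fin 2))
          ({(0,1),(1,0),(1,1),(1,2),(2,1)} : Finset (ℕ × ℕ)) π} := by
  rw [natCard_eq_permCount (G := AvoidsPat₁) fun π => by
      rw [AvoidsMesh, containsMesh_12_iff, ← hasAscentBelowSuffix_wordOf_iff,
        avoids231_iff_not_contains231_wordOf, AvoidsPat₁],
    natCard_eq_permCount (G := AvoidsPat₂) fun π => by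
      rw [AvoidsMesh, containsMesh_21_iff, ← hasUnitDescent_wordOf_iff,
        avoids231_iff_not_contains231_wordOf, AvoidsPat₂],
    isShiftedMotzkin_permCount_avoidsPat₁.unique isShiftedMotzkin_permCount_avoidsPat₂]
end
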